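/- Let S be a Cu-semigroup and let x, y be full elements of S with ρ(x, y) = 0. Then: (1) rc(S, y) ≤ rc(S, n·x) for every positive integer n; (2) if rc(S, x) < ∞, then rc(S, y) = 0; (3) if moreover ρ(y, x) = 0, then rc(S, y) = rc(S, x); (4) if ρ(y, x) = 0 and rc(S, y) < ∞, then rc(S, x) = rc(S, y) = 0. -/

import Mathlib

open scoped ENNReal

/-- `x' ≪ x`: for every increasing sequence whose supremum is `≥ x`,
some term of the sequence dominates `x'`. -/
def CuWayBelow {S : Type*} [Preorder S] (x' x : S) : Prop :=
  ∀ f : ℕ → S, Monotone f → ∀ s : S, IsLUB (Set.range f) s → x ≤ s → ∃ n, x' ≤ f n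

/-- A `Cu`-semigroup: a partially ordered abelian monoid whose least element is `0`,
satisfying the axioms (O1)–(O4). -/
class CuSemigroup (S : Type*) extends AddCommMonoid S, PartialOrder S, IsOrderedAddMonoid S where
  zero_le : ∀ x : S, 0 ≤ x
  O1 : ∀ f : ℕ → S, Monotone f → ∃ s : S, IsLUB (Set.range f) s
  O2 : ∀ x : S, ∃ f : ℕ → S, (∀ n, CuWayBelow (f n) (f (n + 1))) ∧ IsLUB (Set.range f) x
  O3 : ∀ {x' x y' y : S}, CuWayBelow x' x → CuWayBelow y' y → CuWayBelow (x' + y') (x + y)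
  O4 : ∀ f g : ℕ → S, Monotone f → Monotone g → ∀ a b : S,
      IsLUB (Set.range f) a → IsLUB (Set.range g) b →
      IsLUB (Set.range fun n => f n + g n) (a + b)

/-- A functional on a `Cu`-semigroup: a map `S → [0,∞]` which is additive, order
preserving, sends `0` to `0`, and preserves suprema of increasing sequences. -/
structure IsCuFunctional {S : Type*} [CuSemigroup S] (Λ : S → ℝ≥0∞) : Prop where
  map_zero : Λ 0 = 0
  map_add : ∀ x y : S, Λ (x + y) = Λ x + Λ y
  mono : Monotone Λ
  map_sup : ∀ f : ℕ → S, Monotone f → ∀ s : S, IsLUB (Set.range f) s → Λ s = ⨆ n, Λ (f n)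

/-- `x` is full if `∞ · x = sup_n (n • x)` is the largest element of `S`. -/
def IsFull {S : Type*} [CuSemigroup S] (x : S) : Prop :=
  ∀ s : S, IsLUB (Set.range fun n : ℕ => n • x) s → ∀ y : S, y ≤ s

/-- `F_w(S) ≠ ∅`: there exists a functional normalized at `w`. -/
def FNormNonempty {S : Type*} [CuSemigroup S] (w : S) : Prop :=
  ∃ Λ : S → ℝ≥0∞, IsCuFunctional Λ ∧ Λ w = 1

/-- The rank ratio `ρ(x, y)`: the infimum of all `r ∈ (0,∞)` with
`λ(x) ≤ r·λ(y)` for every functional `λ`; `∞` if there is no such `r`. -/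
noncomputable def rankRatio {S : Type*} [CuSemigroup S] (x y : S) : ℝ≥0∞ :=
  sInf {r : ℝ≥0∞ | 0 < r ∧ r ≠ ⊤ ∧ ∀ Λ : S → ℝ≥0∞, IsCuFunctional Λ → Λ x ≤ r * Λ y}

/-- `S` has `r`-comparison relative to `w`. -/
def HasRComparison {S : Type*} [CuSemigroup S] (r : ℝ≥0∞) (w : S) : Prop :=
  ∀ x y : S, (∀ Λ : S → ℝ≥0∞, IsCuFunctional Λ → Λ x + r * Λ w ≤ Λ y) → x ≤ y

/-- The radius of comparison of `S` relative to `w`: the infimum of all `r ∈ (0,∞)`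
for which `S` has `r`-comparison relative to `w`; `∞` if there is no such `r`. -/
noncomputable def rc {S : Type*} [CuSemigroup S] (w : S) : ℝ≥0∞ :=
  sInf {r : ℝ≥0∞ | 0 < r ∧ r ≠ ⊤ ∧ HasRComparison r w}

/-! If `ρ(x, y) = 0`, every functional that is finite on `y` vanishes on `x` (hence on `n • x`),
while the functionals that are infinite on `y` make every comparison hypothesis relative to `y`
trivially satisfiable. So `r`-comparison relative to `n • x`, for a single finite `r`, already
gives `r'`-comparison relative to `y` for every `r' > 0`, i.e. `rc(S, y) = 0`. The four claims
are bookkeeping around this, using that `rc` is either `0` or `∞` on both sides when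
`ρ(x, y) = ρ(y, x) = 0`. -/

namespace IsCuFunctional

variable {S : Type*} [CuSemigroup S] {Λ : S → ℝ≥0∞}

theorem map_nsmul (hΛ : IsCuFunctional Λ) (n : ℕ) (x : S) : Λ (n • x) = n * Λ x := by
  induction n with
  | zero => simpa using hΛ.map_zero
  | succ n ih => rw [succ_nsmul, hΛ.map_add, ih, Nat.cast_succ, add_mul, one_mul]

theorem le_rankRatio_mul (hΛ : IsCuFunctional Λ) {x y : S} (hρ : rankRatio x y ≠ ⊤)
    (hy : Λ y ≠ ⊤) : Λ x ≤ rankRatio x y * Λ y := by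
  rw [rankRatio] at hρ ⊢
  obtain ⟨r₀, hr₀, -⟩ := not_forall₂.mp (mt sInf_eq_top.mpr hρ)
  have := Set.Nonempty.to_subtype ⟨r₀, hr₀⟩
  rw [sInf_eq_iInf', ENNReal.iInf_mul fun h => absurd h hy]
  exact le_iInf fun r => r.2.2.2 Λ hΛ

theorem eq_zero_of_rankRatio_eq_zero (hΛ : IsCuFunctional Λ) {x y : S}
    (h : rankRatio x y = 0) (hy : Λ y ≠ ⊤) : Λ x = 0 := by
  have := hΛ.le_rankRatio_mul (x := x) (by simp [h]) hy
  rwa [h, zero_mul, nonpos_iff_eq_zero] at this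

end IsCuFunctional

section RadiusOfComparison

variable {S : Type*} [CuSemigroup S]

theorem HasRComparison.of_forall_mul_le {r r' : ℝ≥0∞} {w w' : S}
    (hw : ∀ Λ : S → ℝ≥0∞, IsCuFunctional Λ → r * Λ w ≤ r' * Λ w')
    (hr : HasRComparison r w) : HasRComparison r' w' :=
  fun a b hab => hr a b fun Λ hΛ => (add_le_add_right (hw Λ hΛ) _).trans (hab Λ hΛ)

theorem exists_hasRComparison_of_rc_ne_top {w : S} (hw : rc w ≠ ⊤) :
    ∃ r, HasRComparison r w := by
  obtain ⟨r, ⟨-, -, hr⟩, -⟩ := not_forall₂.mp (mt sInf_eq_top.mpr hw)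
  exact ⟨r, hr⟩

theorem rc_eq_zero_of_forall_hasRComparison {w : S}
    (hw : ∀ r : ℝ≥0∞, 0 < r → HasRComparison r w) : rc w = 0 := by
  refine le_antisymm (le_of_forall_gt_imp_ge_of_dense fun r hr => ?_) bot_le
  rcases eq_or_ne r ⊤ with rfl | hr'
  · exact le_top
  · exact sInf_le ⟨hr, hr', hw r hr⟩

theorem rc_eq_zero_of_rankRatio_eq_zero_of_nsmul {x y : S} (h : rankRatio x y = 0) {n : ℕ}
    (hx : rc (n • x) ≠ ⊤) : rc y = 0 := by
  obtain ⟨r, hr⟩ := exists_hasRComparison_of_rc_ne_top hx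
  refine rc_eq_zero_of_forall_hasRComparison fun r' hr' => hr.of_forall_mul_le fun Λ hΛ => ?_
  rcases eq_or_ne (Λ y) ⊤ with hy | hy
  · simp [hy, hr'.ne']
  · simp [hΛ.map_nsmul, hΛ.eq_zero_of_rankRatio_eq_zero h hy]

theorem rc_eq_zero_of_rankRatio_eq_zero {x y : S} (h : rankRatio x y = 0)
    (hx : rc x ≠ ⊤) : rc y = 0 :=
  rc_eq_zero_of_rankRatio_eq_zero_of_nsmul (n := 1) h (by rwa [one_smul])

end RadiusOfComparison

theorem stmt12_general {S : Type*} [CuSemigroup S] (x y : S)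
    (h : rankRatio x y = 0) :
    (∀ n : ℕ, 0 < n → rc y ≤ rc (n • x)) ∧
      (rc x ≠ ⊤ → rc y = 0) ∧
      (rankRatio y x = 0 → rc y = rc x) ∧
      (rankRatio y x = 0 → rc y ≠ ⊤ → rc x = 0 ∧ rc y = 0) := by
  have hyx : rc x ≠ ⊤ → rc y = 0 := rc_eq_zero_of_rankRatio_eq_zero h
  refine ⟨fun n _ => ?_, hyx, fun h' => ?_, fun h' hy => ?_⟩
  · rcases eq_or_ne (rc (n • x)) ⊤ with hn | hn
    · exact hn ▸ le_top
    · exact (rc_eq_zero_of_rankRatio_eq_zero_of_nsmul h hn).trans_le bot_le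
  · have hxy : rc y ≠ ⊤ → rc x = 0 := rc_eq_zero_of_rankRatio_eq_zero h'
    rcases eq_or_ne (rc x) ⊤ with hx | hx
    · rw [hx]
      by_contra hy
      simp [hxy hy] at hx
    · rw [hyx hx, hxy (by simp [hyx hx])]
  · have hx : rc x = 0 := rc_eq_zero_of_rankRatio_eq_zero h' hy
    exact ⟨hx, hyx (by simp [hx])⟩

/-- Lemma (RkRation0): for full elements `x, y` with `ρ(x, y) = 0`:
(1) `rc(S,y) ≤ rc(S, n·x)` for every positive integer `n`;
(2) if `rc(S,x) < ∞` then `rc(S,y) = 0`;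
(3) if moreover `ρ(y,x) = 0` then `rc(S,y) = rc(S,x)`;
(4) if `ρ(y,x) = 0` and `rc(S,y) < ∞` then `rc(S,x) = rc(S,y) = 0`. -/
theorem stmt12 {S : Type*} [CuSemigroup S] (x y : S)
    (hx : IsFull x) (hy : IsFull y) (h : rankRatio x y = 0) :
    (∀ n : ℕ, 0 < n → rc y ≤ rc (n • x)) ∧
      (rc x ≠ ⊤ → rc y = 0) ∧
      (rankRatio y x = 0 → rc y = rc x) ∧
      (rankRatio y x = 0 → rc y ≠ ⊤ → rc x = 0 ∧ rc y = 0) :=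
  stmt12_general x y h
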